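/- arXiv:2111.05230 — 2 statements merged into one kernel-verified Lean document; each statement's English description precedes it below -/
import Mathlib

section
/- Let T > 0, K, d ≥ 1, c ∈ ℝ^d, let b : [0,T] × ℝ^d → ℝ^d be continuous, bounded, and Lipschitz in the space variable uniformly in time (e.g. with bounded continuous partial derivatives ∂_{x_j} b_i), and let σ : [0,T] → ℝ^d and ξ : [0,T] → ℝ^K be bounded continuous. With Σ_{i,k}(r,t) := ∫_r^t σ_i(s)ξ_k(s) ds and Σ^{(i)}(r,t) ∈ ℝ^{K×d} the matrix whose (k,j) entry equals Σ_{i,k}(r,t) if j = i and 0 otherwise, there exists a continuous function u : [0,T] × ℝ^{K×d} → ℝ^d such that for every i ∈ {1,…,d} and all (t,x) ∈ [0,T] × ℝ^{K×d}: u_i(t,x) = c_i·exp(Σ_{k=1}^K [x_{ki} Σ_{i,k}(0,t) − Σ_{i,k}(0,t)²/2]) + ∫_0^t b_i(s, u(s, x − Σ^{(i)}(s,t)))·exp(Σ_{k=1}^K [x_{ki} Σ_{i,k}(s,t) − Σ_{i,k}(s,t)²/2]) ds. -/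
/-!
Write `u = w • v` with the weight `w (t, x) = exp (λ t + |x|² / 2)`. Completing the square,
`x·a - |a|²/2 ≤ |x|²/2`, so the Gaussian factors of the mild equation are dominated by
`exp (|x|²/2)`, and the shift `x ↦ x - Σ^{(i)}(s,t)` is compensated exactly:
`|x - Σ^{(i)}(s,t)|²/2 + Σ_k (x_{ki} Σ_{i,k}(s,t) - Σ_{i,k}(s,t)²/2) = |x|²/2`.
Hence the right-hand side of the mild equation maps `w`-bounded continuous functions to
`w`-bounded ones and is Lipschitz with constant `L / λ` for the weighted sup norm (the `λ t`
in the weight is Bielecki's trick). For `λ = L + 1` it is a contraction, and Banach's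
fixed-point theorem on bounded continuous functions gives `u`.
-/

open MeasureTheory intervalIntegral

/-- `Σ_{i,k}(r,t) := ∫_r^t σ_i(s) ξ_k(s) ds`. -/
noncomputable def SigmaCoef {K d : ℕ} (σ : ℝ → Fin d → ℝ) (ξ : ℝ → Fin K → ℝ)
    (i : Fin d) (k : Fin K) (r t : ℝ) : ℝ :=
  ∫ s in r..t, σ s i * ξ s k

/-- `Σ^{(i)}(r,t)`: the `K × d` matrix whose `(k,j)` entry is `Σ_{i,k}(r,t)` if `j = i`
and `0` otherwise. -/
noncomputable def SigmaMat {K d : ℕ} (σ : ℝ → Fin d → ℝ) (ξ : ℝ → Fin K → ℝ)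
    (i : Fin d) (r t : ℝ) : Fin K → Fin d → ℝ :=
  fun k j => if j = i then SigmaCoef σ ξ i k r t else 0

open scoped BoundedContinuousFunction

theorem exists_continuous_isFixedPt_of_weighted_contraction {X E : Type*} [TopologicalSpace X]
    [NormedAddCommGroup E] [NormedSpace ℝ E] [CompleteSpace E]
    (w : X → ℝ) (hw : Continuous w) (hw_pos : ∀ x, 0 < w x)
    (Φ : (X → E) → X → E) (C : ℝ) (κ : NNReal) (hκ : κ < 1)
    (hΦ_cont : ∀ u, Continuous u → Continuous (Φ u))
    (hΦ_bdd : ∀ u, Continuous u → ∀ x, ‖Φ u x‖ ≤ C * w x)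
    (hΦ_lip : ∀ u v, Continuous u → Continuous v → ∀ D, 0 ≤ D →
      (∀ x, ‖u x - v x‖ ≤ D * w x) → ∀ x, ‖Φ u x - Φ v x‖ ≤ κ * D * w x) :
    ∃ u, Continuous u ∧ Function.IsFixedPt Φ u := by
  have hw_ne x : w x ≠ 0 := (hw_pos x).ne'
  have hcont (v : X →ᵇ E) : Continuous fun x => w x • v x := hw.smul v.continuous
  -- conjugating by multiplication with `w` turns the weighted sup norm into the sup norm
  let F : (X →ᵇ E) → X →ᵇ E := fun v =>
    .ofNormedAddCommGroup (fun x => (w x)⁻¹ • Φ (fun y => w y • v y) x)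
      ((hw.inv₀ hw_ne).smul (hΦ_cont _ (hcont v))) C fun x => by
        rw [norm_smul, Real.norm_eq_abs, abs_inv, abs_of_pos (hw_pos x),
          inv_mul_le_iff₀ (hw_pos x), mul_comm]
        exact hΦ_bdd _ (hcont v) x
  have hF : ContractingWith κ F := by
    refine ⟨hκ, LipschitzWith.of_dist_le_mul fun v v' => ?_⟩
    refine (BoundedContinuousFunction.dist_le (by positivity)).2 fun x => ?_
    have hvv' : ∀ y, ‖w y • v y - w y • v' y‖ ≤ dist v v' * w y := fun y => by
      rw [← smul_sub, norm_smul, Real.norm_eq_abs, abs_of_pos (hw_pos y), mul_comm,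
        ← dist_eq_norm]
      exact mul_le_mul_of_nonneg_right (v.dist_coe_le_dist y) (hw_pos y).le
    have hΦvv' := hΦ_lip _ _ (hcont v) (hcont v') _ dist_nonneg hvv' x
    simp only [F, BoundedContinuousFunction.coe_ofNormedAddCommGroup, dist_smul₀,
      Real.norm_eq_abs, abs_inv, abs_of_pos (hw_pos x), dist_eq_norm (Φ _ x)]
    rwa [inv_mul_le_iff₀ (hw_pos x), mul_comm]
  let v := ContractingWith.fixedPoint F hF
  have hv : F v = v := hF.fixedPoint_isFixedPt
  refine ⟨fun x => w x • v x, hcont v, funext fun x => ?_⟩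
  simpa [F, smul_smul, hw_ne x] using congrArg (fun f : X →ᵇ E => w x • f x) hv

lemma integral_exp_mul_le {l : ℝ} (hl : 0 < l) (t : ℝ) :
    ∫ s in (0:ℝ)..t, Real.exp (l * s) ≤ Real.exp (l * t) / l := by
  rw [intervalIntegral.integral_comp_mul_left (fun s => Real.exp s) hl.ne', integral_exp,
    mul_zero, Real.exp_zero, smul_eq_mul, inv_mul_eq_div]
  gcongr
  linarith

section ColumnShift

variable {ι κ : Type*} [Fintype ι] [Fintype κ]

noncomputable def halfSqNorm (x : ι → κ → ℝ) : ℝ := ∑ k, ∑ j, x k j ^ 2 / 2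

@[fun_prop]
lemma continuous_halfSqNorm : Continuous (halfSqNorm : (ι → κ → ℝ) → ℝ) := by
  unfold halfSqNorm
  fun_prop

lemma sum_mul_sub_sq_le_halfSqNorm (x : ι → κ → ℝ) (i : κ) (a : ι → ℝ) :
    ∑ k, (x k i * a k - a k ^ 2 / 2) ≤ halfSqNorm x := by
  refine Finset.sum_le_sum fun k _ => ?_
  calc x k i * a k - a k ^ 2 / 2 ≤ x k i ^ 2 / 2 := by nlinarith [sq_nonneg (x k i - a k)]
    _ ≤ ∑ j, x k j ^ 2 / 2 :=
      Finset.single_le_sum (f := fun j => x k j ^ 2 / 2) (fun j _ => by positivity)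
        (Finset.mem_univ i)

lemma halfSqNorm_sub_add_sum [DecidableEq κ] (x : ι → κ → ℝ) (i : κ) (a : ι → ℝ) :
    halfSqNorm (x - fun k j => if j = i then a k else 0) + ∑ k, (x k i * a k - a k ^ 2 / 2)
      = halfSqNorm x := by
  have hrow k j : (x k j - if j = i then a k else 0) ^ 2 / 2
      = x k j ^ 2 / 2 + if j = i then a k ^ 2 / 2 - x k i * a k else 0 := by
    split_ifs with h
    · subst h; ring
    · ring
  simp only [halfSqNorm, Pi.sub_apply, hrow, Finset.sum_add_distrib, Finset.sum_ite_eq',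
    Finset.mem_univ, if_true]
  rw [add_assoc, ← Finset.sum_add_distrib]
  simp

end ColumnShift

section MildEquation

variable {K d : ℕ} {σ : ℝ → Fin d → ℝ} {ξ : ℝ → Fin K → ℝ} {α : Type*} [TopologicalSpace α]

@[fun_prop]
lemma Continuous.sigmaCoef {f g : α → ℝ} (hf : Continuous f) (hg : Continuous g)
    (hσ : Continuous σ) (hξ : Continuous ξ) (i : Fin d) (k : Fin K) :
    Continuous fun a => SigmaCoef σ ξ i k (f a) (g a) := by
  have hc : Continuous fun s => σ s i * ξ s k := by fun_prop
  have hP := intervalIntegral.continuous_primitive (μ := volume)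
    (fun a b => hc.intervalIntegrable a b) 0
  have hsub a : SigmaCoef σ ξ i k (f a) (g a)
      = (∫ s in (0:ℝ)..g a, σ s i * ξ s k) - ∫ s in (0:ℝ)..f a, σ s i * ξ s k :=
    (integral_interval_sub_left (hc.intervalIntegrable _ _) (hc.intervalIntegrable _ _)).symm
  simp only [hsub]
  exact (hP.comp hg).sub (hP.comp hf)

@[fun_prop]
lemma Continuous.sigmaMat {f g : α → ℝ} (hf : Continuous f) (hg : Continuous g)
    (hσ : Continuous σ) (hξ : Continuous ξ) (i : Fin d) :
    Continuous fun a => SigmaMat σ ξ i (f a) (g a) := by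
  refine continuous_pi fun k => continuous_pi fun j => ?_
  unfold SigmaMat
  split_ifs
  · exact hf.sigmaCoef hg hσ hξ i k
  · exact continuous_const

variable (σ ξ) in
noncomputable def girsanovExponent (i : Fin d) (x : Fin K → Fin d → ℝ) (r t : ℝ) : ℝ :=
  ∑ k, (x k i * SigmaCoef σ ξ i k r t - SigmaCoef σ ξ i k r t ^ 2 / 2)

@[fun_prop]
lemma Continuous.girsanovExponent {x : α → Fin K → Fin d → ℝ} {f g : α → ℝ}
    (hx : Continuous x) (hf : Continuous f) (hg : Continuous g)
    (hσ : Continuous σ) (hξ : Continuous ξ) (i : Fin d) :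
    Continuous fun a => girsanovExponent σ ξ i (x a) (f a) (g a) := by
  unfold _root_.girsanovExponent
  fun_prop

lemma girsanovExponent_le_halfSqNorm (i : Fin d) (x : Fin K → Fin d → ℝ) (r t : ℝ) :
    girsanovExponent σ ξ i x r t ≤ halfSqNorm x :=
  sum_mul_sub_sq_le_halfSqNorm x i _

lemma halfSqNorm_sub_sigmaMat_add_girsanovExponent (i : Fin d) (x : Fin K → Fin d → ℝ)
    (r t : ℝ) :
    halfSqNorm (x - SigmaMat σ ξ i r t) + girsanovExponent σ ξ i x r t = halfSqNorm x :=
  halfSqNorm_sub_add_sum x i _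

variable (σ ξ) in
noncomputable def mildIntegrand (b : ℝ → (Fin d → ℝ) → Fin d → ℝ)
    (u : ℝ × (Fin K → Fin d → ℝ) → Fin d → ℝ) (i : Fin d) (x : Fin K → Fin d → ℝ)
    (t s : ℝ) : ℝ :=
  b s (u (s, x - SigmaMat σ ξ i s t)) i * Real.exp (girsanovExponent σ ξ i x s t)

variable (σ ξ) in
noncomputable def mildRHS (c : Fin d → ℝ) (b : ℝ → (Fin d → ℝ) → Fin d → ℝ)
    (u : ℝ × (Fin K → Fin d → ℝ) → Fin d → ℝ) (i : Fin d) (t : ℝ)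
    (x : Fin K → Fin d → ℝ) : ℝ :=
  c i * Real.exp (girsanovExponent σ ξ i x 0 t) + ∫ s in (0:ℝ)..t, mildIntegrand σ ξ b u i x t s

variable {T : ℝ} (hT : 0 ≤ T)

variable (σ ξ) in
/-- Time is clamped to `[0, T]`, the only range on which `b` is controlled. -/
noncomputable def mildMap (c : Fin d → ℝ) (b : ℝ → (Fin d → ℝ) → Fin d → ℝ)
    (u : ℝ × (Fin K → Fin d → ℝ) → Fin d → ℝ) (p : ℝ × (Fin K → Fin d → ℝ)) : Fin d → ℝ :=
  fun i => mildRHS σ ξ c b u i (Set.projIcc 0 T hT p.1) p.2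

noncomputable def mildWeight (l : ℝ) (p : ℝ × (Fin K → Fin d → ℝ)) : ℝ :=
  Real.exp (l * Set.projIcc 0 T hT p.1 + halfSqNorm p.2)

lemma continuous_mildWeight (l : ℝ) : Continuous (mildWeight (K := K) (d := d) hT l) := by
  unfold mildWeight
  fun_prop

lemma mildWeight_pos (l : ℝ) (p : ℝ × (Fin K → Fin d → ℝ)) : 0 < mildWeight hT l p :=
  Real.exp_pos _

variable {b : ℝ → (Fin d → ℝ) → Fin d → ℝ} {u v : ℝ × (Fin K → Fin d → ℝ) → Fin d → ℝ}

lemma continuous_mildIntegrand (hb : Continuous fun p : ℝ × (Fin d → ℝ) => b p.1 p.2)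
    (hu : Continuous u) (hσ : Continuous σ) (hξ : Continuous ξ) (i : Fin d) :
    Continuous fun q : (Fin K → Fin d → ℝ) × ℝ × ℝ =>
      mildIntegrand σ ξ b u i q.1 q.2.1 q.2.2 := by
  have hbu : Continuous fun q : (Fin K → Fin d → ℝ) × ℝ × ℝ =>
      b q.2.2 (u (q.2.2, q.1 - SigmaMat σ ξ i q.2.2 q.2.1)) :=
    hb.comp (continuous_snd.comp continuous_snd |>.prodMk (by fun_prop))
  unfold mildIntegrand
  fun_prop

lemma continuous_mildMap (hb : Continuous fun p : ℝ × (Fin d → ℝ) => b p.1 p.2)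
    (hu : Continuous u) (hσ : Continuous σ) (hξ : Continuous ξ) (c : Fin d → ℝ) :
    Continuous (mildMap σ ξ hT c b u) := by
  refine continuous_pi fun i => ?_
  have hτ : Continuous fun p : ℝ × (Fin K → Fin d → ℝ) => (Set.projIcc 0 T hT p.1 : ℝ) := by
    fun_prop
  simp only [mildMap, mildRHS]
  refine Continuous.add (by fun_prop) ?_
  have hf : Continuous fun q : (ℝ × (Fin K → Fin d → ℝ)) × ℝ =>
      mildIntegrand σ ξ b u i q.1.2 (Set.projIcc 0 T hT q.1.1) q.2 :=
    (continuous_mildIntegrand hb hu hσ hξ i).comp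
      (f := fun q : (ℝ × (Fin K → Fin d → ℝ)) × ℝ =>
        (q.1.2, (Set.projIcc 0 T hT q.1.1 : ℝ), q.2)) (by fun_prop)
  exact intervalIntegral.continuous_parametric_intervalIntegral_of_continuous (μ := volume)
    (f := fun p s => mildIntegrand σ ξ b u i p.2 (Set.projIcc 0 T hT p.1) s) hf hτ

lemma mildWeight_mul_exp_girsanovExponent (l : ℝ) {s : ℝ} (hs : s ∈ Set.Icc 0 T) (i : Fin d)
    (x : Fin K → Fin d → ℝ) (t : ℝ) :
    mildWeight hT l (s, x - SigmaMat σ ξ i s t) * Real.exp (girsanovExponent σ ξ i x s t)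
      = Real.exp (l * s + halfSqNorm x) := by
  rw [mildWeight, ← Real.exp_add, Set.projIcc_of_mem hT hs, add_assoc,
    halfSqNorm_sub_sigmaMat_add_girsanovExponent]

variable {M : ℝ}

lemma abs_mildRHS_le (hM : 0 ≤ M) (hb : ∀ s ∈ Set.Icc 0 T, ∀ y, ‖b s y‖ ≤ M)
    (c : Fin d → ℝ) (u : ℝ × (Fin K → Fin d → ℝ) → Fin d → ℝ) (i : Fin d) {t : ℝ}
    (ht : t ∈ Set.Icc 0 T) (x : Fin K → Fin d → ℝ) :
    |mildRHS σ ξ c b u i t x| ≤ (‖c‖ + T * M) * Real.exp (halfSqNorm x) := by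
  have hexp r : Real.exp (girsanovExponent σ ξ i x r t) ≤ Real.exp (halfSqNorm x) :=
    Real.exp_le_exp.2 (girsanovExponent_le_halfSqNorm i x r t)
  have hI : ‖∫ s in (0:ℝ)..t, mildIntegrand σ ξ b u i x t s‖
      ≤ M * Real.exp (halfSqNorm x) * |t - 0| := by
    refine intervalIntegral.norm_integral_le_of_norm_le_const fun s hs => ?_
    rw [Set.uIoc_of_le ht.1] at hs
    rw [mildIntegrand, norm_mul, Real.norm_eq_abs, Real.norm_eq_abs, Real.abs_exp]
    exact mul_le_mul ((norm_le_pi_norm _ i).trans (hb s ⟨hs.1.le, hs.2.trans ht.2⟩ _))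
      (hexp s) (Real.exp_pos _).le hM
  rw [Real.norm_eq_abs, sub_zero, abs_of_nonneg ht.1] at hI
  calc |mildRHS σ ξ c b u i t x|
      ≤ |c i| * Real.exp (girsanovExponent σ ξ i x 0 t)
        + |∫ s in (0:ℝ)..t, mildIntegrand σ ξ b u i x t s| := by
        rw [mildRHS]
        exact (abs_add_le _ _).trans_eq (by rw [abs_mul, Real.abs_exp])
    _ ≤ ‖c‖ * Real.exp (halfSqNorm x) + M * Real.exp (halfSqNorm x) * T :=
        add_le_add
          (mul_le_mul (norm_le_pi_norm c i) (hexp 0) (Real.exp_pos _).le (norm_nonneg c))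
          (hI.trans (mul_le_mul_of_nonneg_left ht.2 (by positivity)))
    _ = (‖c‖ + T * M) * Real.exp (halfSqNorm x) := by ring

lemma norm_mildMap_le (hM : 0 ≤ M) (hb : ∀ s ∈ Set.Icc 0 T, ∀ y, ‖b s y‖ ≤ M)
    (c : Fin d → ℝ) (u : ℝ × (Fin K → Fin d → ℝ) → Fin d → ℝ) {l : ℝ} (hl : 0 ≤ l)
    (p : ℝ × (Fin K → Fin d → ℝ)) :
    ‖mildMap σ ξ hT c b u p‖ ≤ (‖c‖ + T * M) * mildWeight hT l p := by
  have hτ := (Set.projIcc 0 T hT p.1).2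
  refine (pi_norm_le_iff_of_nonneg (by positivity [mildWeight_pos hT l p])).2 fun i => ?_
  refine (abs_mildRHS_le hM hb c u i hτ p.2).trans ?_
  rw [mildWeight]
  gcongr
  exact le_add_of_nonneg_left (mul_nonneg hl hτ.1)

variable {L : NNReal} {l D : ℝ}

lemma abs_mildIntegrand_sub_le (hb_lip : ∀ s ∈ Set.Icc 0 T, LipschitzWith L (b s))
    (huv : ∀ p, ‖u p - v p‖ ≤ D * mildWeight hT l p) (i : Fin d) (x : Fin K → Fin d → ℝ)
    (t : ℝ) {s : ℝ} (hs : s ∈ Set.Icc 0 T) :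
    |mildIntegrand σ ξ b u i x t s - mildIntegrand σ ξ b v i x t s|
      ≤ L * D * Real.exp (l * s + halfSqNorm x) := by
  set y : ℝ × (Fin K → Fin d → ℝ) := (s, x - SigmaMat σ ξ i s t)
  have hby : |b s (u y) i - b s (v y) i| ≤ L * (D * mildWeight hT l y) :=
    calc |b s (u y) i - b s (v y) i| ≤ ‖b s (u y) - b s (v y)‖ :=
          norm_le_pi_norm (b s (u y) - b s (v y)) i
      _ ≤ L * ‖u y - v y‖ := (hb_lip s hs).norm_sub_le _ _
      _ ≤ L * (D * mildWeight hT l y) := by gcongr; exact huv y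
  rw [mildIntegrand, mildIntegrand, ← sub_mul, abs_mul, Real.abs_exp,
    ← mildWeight_mul_exp_girsanovExponent hT l hs i x t]
  calc |b s (u y) i - b s (v y) i| * Real.exp (girsanovExponent σ ξ i x s t)
      ≤ L * (D * mildWeight hT l y) * Real.exp (girsanovExponent σ ξ i x s t) := by gcongr
    _ = L * D * (mildWeight hT l y * Real.exp (girsanovExponent σ ξ i x s t)) := by ring

lemma abs_mildRHS_sub_le (hb : Continuous fun p : ℝ × (Fin d → ℝ) => b p.1 p.2)
    (hb_lip : ∀ s ∈ Set.Icc 0 T, LipschitzWith L (b s)) (hσ : Continuous σ) (hξ : Continuous ξ)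
    (hu : Continuous u) (hv : Continuous v) (hl : 0 < l) (hD : 0 ≤ D)
    (huv : ∀ p, ‖u p - v p‖ ≤ D * mildWeight hT l p) (c : Fin d → ℝ) (i : Fin d) {t : ℝ}
    (ht : t ∈ Set.Icc 0 T) (x : Fin K → Fin d → ℝ) :
    |mildRHS σ ξ c b u i t x - mildRHS σ ξ c b v i t x|
      ≤ L / l * D * Real.exp (l * t + halfSqNorm x) := by
  have hint {w : ℝ × (Fin K → Fin d → ℝ) → Fin d → ℝ} (hw : Continuous w) :
      IntervalIntegrable (mildIntegrand σ ξ b w i x t) volume 0 t :=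
    ((continuous_mildIntegrand hb hw hσ hξ i).comp
      (by fun_prop : Continuous fun s : ℝ => (x, t, s))).intervalIntegrable _ _
  rw [mildRHS, mildRHS, add_sub_add_left_eq_sub,
    ← intervalIntegral.integral_sub (hint hu) (hint hv), ← Real.norm_eq_abs]
  calc ‖∫ s in (0:ℝ)..t, (mildIntegrand σ ξ b u i x t s - mildIntegrand σ ξ b v i x t s)‖
      ≤ ∫ s in (0:ℝ)..t, L * D * Real.exp (l * s + halfSqNorm x) :=
        intervalIntegral.norm_integral_le_of_norm_le ht.1
          (Filter.Eventually.of_forall fun s hs =>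
            abs_mildIntegrand_sub_le hT hb_lip huv i x t ⟨hs.1.le, hs.2.trans ht.2⟩)
          ((by fun_prop : Continuous fun s => L * D * Real.exp (l * s + halfSqNorm x)
            ).intervalIntegrable _ _)
    _ = L * D * Real.exp (halfSqNorm x) * ∫ s in (0:ℝ)..t, Real.exp (l * s) := by
        rw [← intervalIntegral.integral_const_mul]
        congr 1 with s
        rw [Real.exp_add]
        ring
    _ ≤ L * D * Real.exp (halfSqNorm x) * (Real.exp (l * t) / l) := by
        gcongr
        exact integral_exp_mul_le hl t
    _ = L / l * D * Real.exp (l * t + halfSqNorm x) := by rw [Real.exp_add]; ring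

lemma norm_mildMap_sub_le (hb : Continuous fun p : ℝ × (Fin d → ℝ) => b p.1 p.2)
    (hb_lip : ∀ s ∈ Set.Icc 0 T, LipschitzWith L (b s)) (hσ : Continuous σ) (hξ : Continuous ξ)
    (hu : Continuous u) (hv : Continuous v) (hl : 0 < l) (hD : 0 ≤ D)
    (huv : ∀ p, ‖u p - v p‖ ≤ D * mildWeight hT l p) (c : Fin d → ℝ)
    (p : ℝ × (Fin K → Fin d → ℝ)) :
    ‖mildMap σ ξ hT c b u p - mildMap σ ξ hT c b v p‖ ≤ L / l * D * mildWeight hT l p :=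
  (pi_norm_le_iff_of_nonneg (by positivity [mildWeight_pos hT l p])).2 fun i =>
    abs_mildRHS_sub_le hT hb hb_lip hσ hξ hu hv hl hD huv c i (Set.projIcc 0 T hT p.1).2 p.2

end MildEquation

theorem mild_solution_exists_general (T : ℝ) (hT : 0 < T) (K d : ℕ)
    (c : Fin d → ℝ)
    (b : ℝ → (Fin d → ℝ) → (Fin d → ℝ))
    (hb_cont : Continuous fun p : ℝ × (Fin d → ℝ) => b p.1 p.2)
    (M : ℝ) (hb_bdd : ∀ t ∈ Set.Icc (0:ℝ) T, ∀ x : Fin d → ℝ, ∀ i : Fin d, |b t x i| ≤ M)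
    (L : NNReal) (hb_lip : ∀ t ∈ Set.Icc (0:ℝ) T, LipschitzWith L (b t))
    (σ : ℝ → Fin d → ℝ) (hσ : Continuous σ)
    (ξ : ℝ → Fin K → ℝ) (hξ : Continuous ξ) :
    ∃ u : ℝ × (Fin K → Fin d → ℝ) → (Fin d → ℝ),
      Continuous u ∧
      ∀ i : Fin d, ∀ t ∈ Set.Icc (0:ℝ) T, ∀ x : Fin K → Fin d → ℝ,
        u (t, x) i
          = c i * Real.exp (∑ k, (x k i * SigmaCoef σ ξ i k 0 t
                - SigmaCoef σ ξ i k 0 t ^ 2 / 2))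
            + ∫ s in (0:ℝ)..t,
                b s (u (s, x - SigmaMat σ ξ i s t)) i
                  * Real.exp (∑ k, (x k i * SigmaCoef σ ξ i k s t
                      - SigmaCoef σ ξ i k s t ^ 2 / 2)) := by
  have hM := le_max_right M 0
  have hb_norm : ∀ s ∈ Set.Icc 0 T, ∀ y, ‖b s y‖ ≤ max M 0 := fun s hs y =>
    (pi_norm_le_iff_of_nonneg hM).2 fun i => (hb_bdd s hs y i).trans (le_max_left M 0)
  have hκ : L / (L + 1) < 1 := (div_lt_one (by positivity)).2 (lt_add_one L)
  obtain ⟨u, hu, hfix⟩ := exists_continuous_isFixedPt_of_weighted_contraction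
    (mildWeight hT.le (L + 1)) (continuous_mildWeight hT.le _) (mildWeight_pos hT.le _)
    (mildMap σ ξ hT.le c b) (‖c‖ + T * max M 0) (L / (L + 1)) hκ
    (fun _ hu => continuous_mildMap hT.le hb_cont hu hσ hξ c)
    (fun u _ => norm_mildMap_le hT.le hM hb_norm c u (by positivity))
    (fun _ _ hu hv _ hD huv p => by
      simpa using
        norm_mildMap_sub_le hT.le hb_cont hb_lip hσ hξ hu hv (by positivity) hD huv c p)
  refine ⟨u, hu, fun i t ht x => ?_⟩
  rw [← congrFun (congrFun hfix (t, x)) i, mildMap, Set.projIcc_of_mem hT.le ht]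
  rfl

/-- **Existence for the mild form of the Wong–Zakai approximating equation.**
For bounded continuous `b`, Lipschitz in the space variable uniformly in time, and
bounded continuous `σ, ξ`, there is a continuous `u` satisfying the mild equation. -/
theorem mild_solution_exists (T : ℝ) (hT : 0 < T) (K d : ℕ) (hK : 1 ≤ K) (hd : 1 ≤ d)
    (c : Fin d → ℝ)
    (b : ℝ → (Fin d → ℝ) → (Fin d → ℝ))
    (hb_cont : Continuous fun p : ℝ × (Fin d → ℝ) => b p.1 p.2)
    (M : ℝ) (hb_bdd : ∀ t ∈ Set.Icc (0:ℝ) T, ∀ x : Fin d → ℝ, ∀ i : Fin d, |b t x i| ≤ M)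
    (L : NNReal) (hb_lip : ∀ t ∈ Set.Icc (0:ℝ) T, LipschitzWith L (b t))
    (σ : ℝ → Fin d → ℝ) (hσ : Continuous σ)
    (Sb : ℝ) (hσ_bdd : ∀ t ∈ Set.Icc (0:ℝ) T, ∀ i : Fin d, |σ t i| ≤ Sb)
    (ξ : ℝ → Fin K → ℝ) (hξ : Continuous ξ)
    (Xb : ℝ) (hξ_bdd : ∀ t ∈ Set.Icc (0:ℝ) T, ∀ k : Fin K, |ξ t k| ≤ Xb) :
    ∃ u : ℝ × (Fin K → Fin d → ℝ) → (Fin d → ℝ),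
      Continuous u ∧
      ∀ i : Fin d, ∀ t ∈ Set.Icc (0:ℝ) T, ∀ x : Fin K → Fin d → ℝ,
        u (t, x) i
          = c i * Real.exp (∑ k, (x k i * SigmaCoef σ ξ i k 0 t
                - SigmaCoef σ ξ i k 0 t ^ 2 / 2))
            + ∫ s in (0:ℝ)..t,
                b s (u (s, x - SigmaMat σ ξ i s t)) i
                  * Real.exp (∑ k, (x k i * SigmaCoef σ ξ i k s t
                      - SigmaCoef σ ξ i k s t ^ 2 / 2)) :=
  mild_solution_exists_general T hT K d c b hb_cont M hb_bdd L hb_lip σ hσ ξ hξ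
end

section
/- Let V ≥ 0, let X and X_n (n ≥ 1) be real random variables on a common probability space such that for each n the pair (X_n, X) has a centered Gaussian joint law on ℝ², with variances v_n := E[X_n²] ≤ V and v := E[X²] ≤ V, and suppose E[(X_n − X)²] → 0 as n → ∞. Then for every p ≥ 1, exp(X_n − v_n/2) converges to exp(X − v/2) in L^p, i.e. E[ |exp(X_n − v_n/2) − exp(X − v/2)|^p ] → 0 as n → ∞. -/
/-!
For a jointly centered Gaussian pair `(Y, Z)` the mixed moments of the stochastic exponentials
are explicit, `E[ℰ(Y)^k ℰ(Z)^j] = exp (E[(kY + jZ)²]/2 - (k E[Y²] + j E[Z²])/2)`, and depend only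
on second moments. As `X_n → X` in `L²`, every such moment of `(ℰ(X_n), ℰ(X))` with `k + j = N`
tends to the same number `exp (N (N - 1) E[X²] / 2)`, so the binomial expansion of
`E[(ℰ(X_n) - ℰ(X))^N]` tends to `(1 - 1)^N exp (N (N - 1) E[X²] / 2) = 0`. Choosing `N` even
with `N ≥ p`, Lyapunov's inequality `E|U|^p ≤ (E|U|^N)^(p/N)` gives the `L^p` convergence.
-/

open MeasureTheory ProbabilityTheory Filter

open Real Topology
open scoped NNReal ENNReal

section GaussianMoments

variable {Ω : Type*} [MeasurableSpace Ω] {P : Measure Ω} {Y : Ω → ℝ} {w : ℝ≥0}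

lemma hasLaw_of_map_eq_gaussianReal (h : P.map Y = gaussianReal 0 w) :
    HasLaw Y (gaussianReal 0 w) P :=
  ⟨aemeasurable_of_map_neZero (by rw [h]; infer_instance), h⟩

lemma memLp_two_of_map_eq_gaussianReal (h : P.map Y = gaussianReal 0 w) : MemLp Y 2 P := by
  have hid : MemLp id 2 (P.map Y) := h ▸ memLp_id_gaussianReal 2
  exact (memLp_map_measure_iff aestronglyMeasurable_id
    (hasLaw_of_map_eq_gaussianReal h).aemeasurable).mp hid

lemma integral_sq_of_map_eq_gaussianReal (h : P.map Y = gaussianReal 0 w) :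
    ∫ ω, Y ω ^ 2 ∂P = w := by
  have hY := hasLaw_of_map_eq_gaussianReal h
  have hmean : ∫ ω, Y ω ∂P = 0 := by
    simpa using hY.integral_comp (f := id) aestronglyMeasurable_id
  rw [← variance_of_integral_eq_zero hY.aemeasurable hmean, hY.variance_eq,
    variance_id_gaussianReal]

lemma integrable_exp_mul_of_map_eq_gaussianReal (h : P.map Y = gaussianReal 0 w) (t : ℝ) :
    Integrable (fun ω => exp (t * Y ω)) P := by
  have := (hasLaw_of_map_eq_gaussianReal h).isProbabilityMeasure
  exact mgf_pos_iff.mp (by rw [mgf_gaussianReal h]; exact exp_pos _)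

lemma integral_exp_of_map_eq_gaussianReal (h : P.map Y = gaussianReal 0 w) :
    ∫ ω, exp (Y ω) ∂P = exp ((∫ ω, Y ω ^ 2 ∂P) / 2) := by
  simpa [mgf, integral_sq_of_map_eq_gaussianReal h] using mgf_gaussianReal h 1

lemma memLp_exp_of_map_eq_gaussianReal (h : P.map Y = gaussianReal 0 w) {p : ℝ≥0∞}
    (hp : p ≠ ∞) : MemLp (fun ω => exp (Y ω)) p P := by
  have hmeas : AEStronglyMeasurable (fun ω => exp (Y ω)) P :=
    (hasLaw_of_map_eq_gaussianReal h).aemeasurable.exp.aestronglyMeasurable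
  rcases eq_or_ne p 0 with rfl | hp0
  · exact memLp_zero_iff_aestronglyMeasurable.mpr hmeas
  rw [← integrable_norm_rpow_iff hmeas hp0 hp]
  simpa only [Real.norm_eq_abs, abs_exp, ← Real.exp_mul, mul_comm] using
    integrable_exp_mul_of_map_eq_gaussianReal h p.toReal

end GaussianMoments

section Moments

variable {α : Type*} [MeasurableSpace α] {μ : Measure α}

lemma MeasureTheory.MemLp.norm_toLp_sq {f : α → ℝ} (hf : MemLp f 2 μ) :
    ‖hf.toLp f‖ ^ 2 = ∫ x, f x ^ 2 ∂μ := by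
  rw [Lp.norm_toLp, hf.eLpNorm_eq_integral_rpow_norm two_ne_zero ENNReal.ofNat_ne_top,
    ENNReal.toReal_ofReal (by positivity)]
  simp only [ENNReal.toReal_ofNat, Real.rpow_two, Real.norm_eq_abs, sq_abs]
  rw [← Real.rpow_natCast, ← Real.rpow_mul (integral_nonneg fun x => sq_nonneg _)]
  norm_num

lemma tendsto_integral_sq_of_tendsto_integral_sq_sub {ι : Type*} {l : Filter ι}
    {Y : ι → α → ℝ} {Z : α → ℝ} (hY : ∀ i, MemLp (Y i) 2 μ) (hZ : MemLp Z 2 μ)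
    (h : Tendsto (fun i => ∫ x, (Y i x - Z x) ^ 2 ∂μ) l (𝓝 0)) :
    Tendsto (fun i => ∫ x, Y i x ^ 2 ∂μ) l (𝓝 (∫ x, Z x ^ 2 ∂μ)) := by
  have hdist : ∀ i, ‖(hY i).toLp - hZ.toLp‖ = √(∫ x, (Y i x - Z x) ^ 2 ∂μ) := fun i => by
    rw [← MemLp.toLp_sub, ← Real.sqrt_sq (norm_nonneg _), ((hY i).sub hZ).norm_toLp_sq]
    rfl
  have hlim : Tendsto (fun i => (hY i).toLp (Y i)) l (𝓝 (hZ.toLp Z)) := by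
    rw [tendsto_iff_norm_sub_tendsto_zero]
    simpa [hdist] using h.sqrt
  simpa only [MemLp.norm_toLp_sq] using hlim.norm.pow 2

lemma tendsto_integral_sub_pow_of_tendsto_integral_pow_mul_pow {ι : Type*} {l : Filter ι}
    {f g : ι → α → ℝ} {N : ℕ} (hN : N ≠ 0) {c : ℝ}
    (hint : ∀ i, ∀ k ≤ N, Integrable (fun x => f i x ^ k * g i x ^ (N - k)) μ)
    (hlim : ∀ k ≤ N, Tendsto (fun i => ∫ x, f i x ^ k * g i x ^ (N - k) ∂μ) l (𝓝 c)) :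
    Tendsto (fun i => ∫ x, (f i x - g i x) ^ N ∂μ) l (𝓝 0) := by
  have hk : ∀ k ∈ Finset.range (N + 1), k ≤ N := fun _ => Finset.mem_range_succ_iff.mp
  have hexpand : ∀ i, ∫ x, (f i x - g i x) ^ N ∂μ = ∑ k ∈ Finset.range (N + 1),
      (-1) ^ (k + N) * N.choose k * ∫ x, f i x ^ k * g i x ^ (N - k) ∂μ := fun i => by
    have hterm : ∀ k ∈ Finset.range (N + 1),
        Integrable (fun x => (-1) ^ (k + N) * N.choose k * (f i x ^ k * g i x ^ (N - k))) μ :=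
      fun k hkN => (hint i k (hk k hkN)).const_mul _
    simp_rw [sub_pow, ← integral_const_mul, ← integral_finsetSum _ hterm]
    congr 1 with x
    exact Finset.sum_congr rfl fun k _ => by ring
  have hsum : ∑ k ∈ Finset.range (N + 1), (-1 : ℝ) ^ (k + N) * N.choose k * c = 0 := by
    have h := sub_pow (1 : ℝ) 1 N
    simp only [sub_self, zero_pow hN, one_pow, mul_one] at h
    rw [← Finset.sum_mul, ← h, zero_mul]
  rw [← hsum]
  simp_rw [hexpand]
  exact tendsto_finsetSum _ fun k hkN => (hlim k (hk k hkN)).const_mul _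

lemma MeasureTheory.MemLp.integral_rpow_abs_eq {f : α → ℝ} {p : ℝ} (hp : 0 < p)
    (hf : MemLp f (ENNReal.ofReal p) μ) :
    ∫ x, |f x| ^ p ∂μ = (eLpNorm f (ENNReal.ofReal p) μ).toReal ^ p := by
  rw [hf.eLpNorm_eq_integral_rpow_norm (by simpa using hp) ENNReal.ofReal_ne_top,
    ENNReal.toReal_ofReal hp.le, ENNReal.toReal_ofReal (by positivity),
    ← Real.rpow_mul (by positivity), inv_mul_cancel₀ hp.ne', Real.rpow_one]
  simp only [Real.norm_eq_abs]

lemma integral_rpow_abs_le_rpow_integral_rpow_abs [IsProbabilityMeasure μ] {f : α → ℝ}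
    {p q : ℝ} (hp : 0 < p) (hpq : p ≤ q) (hf : MemLp f (ENNReal.ofReal q) μ) :
    ∫ x, |f x| ^ p ∂μ ≤ (∫ x, |f x| ^ q ∂μ) ^ (p / q) := by
  have hq : 0 < q := hp.trans_le hpq
  have hle : ENNReal.ofReal p ≤ ENNReal.ofReal q := ENNReal.ofReal_le_ofReal hpq
  rw [(hf.mono_exponent hle).integral_rpow_abs_eq hp, hf.integral_rpow_abs_eq hq,
    ← Real.rpow_mul ENNReal.toReal_nonneg, mul_div_cancel₀ _ hq.ne']
  gcongr
  · exact hf.eLpNorm_ne_top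
  · exact eLpNorm_le_eLpNorm_of_exponent_le hle hf.aestronglyMeasurable

lemma tendsto_integral_rpow_abs_of_tendsto_integral_pow [IsProbabilityMeasure μ]
    {ι : Type*} {l : Filter ι} {f : ι → α → ℝ} {p : ℝ} {N : ℕ} (hp : 0 < p) (hpN : p ≤ N)
    (hN : Even N) (hf : ∀ i, MemLp (f i) N μ)
    (h : Tendsto (fun i => ∫ x, f i x ^ N ∂μ) l (𝓝 0)) :
    Tendsto (fun i => ∫ x, |f i x| ^ p ∂μ) l (𝓝 0) := by
  have hpN' : 0 < p / N := div_pos hp (hp.trans_le hpN)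
  have hbound : ∀ i, ∫ x, |f i x| ^ p ∂μ ≤ (∫ x, f i x ^ N ∂μ) ^ (p / N) := fun i => by
    have := integral_rpow_abs_le_rpow_integral_rpow_abs hp hpN
      (by simpa only [ENNReal.ofReal_natCast] using hf i)
    simpa only [Real.rpow_natCast, hN.pow_abs] using this
  refine squeeze_zero (fun i => integral_nonneg fun x => by positivity) hbound ?_
  simpa [Real.zero_rpow hpN'.ne'] using h.rpow_const (Or.inr hpN'.le)

end Moments

section CenteredGaussianPair

variable {Ω : Type*} [MeasurableSpace Ω] {P : Measure Ω}

/-- The law of `(Y, Z)` on `ℝ²` is centered Gaussian, stated through its one-dimensional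
projections (Cramér–Wold). -/
def IsCenteredGaussianPair (P : Measure Ω) (Y Z : Ω → ℝ) : Prop :=
  ∀ a b : ℝ, ∃ w : ℝ≥0, P.map (fun ω => a * Y ω + b * Z ω) = gaussianReal 0 w

/-- For centered `Y`, `∫ Y²` is the variance, so this is `exp (Y - Var Y / 2)`. -/
noncomputable def stochasticExp (P : Measure Ω) (Y : Ω → ℝ) (ω : Ω) : ℝ :=
  exp (Y ω - (∫ ω', Y ω' ^ 2 ∂P) / 2)

lemma stochasticExp_pow_mul_pow (Y Z : Ω → ℝ) (k j : ℕ) (ω : Ω) :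
    stochasticExp P Y ω ^ k * stochasticExp P Z ω ^ j
      = exp (k * Y ω + j * Z ω)
        * exp (-(k * ∫ ω, Y ω ^ 2 ∂P + j * ∫ ω, Z ω ^ 2 ∂P) / 2) := by
  simp only [stochasticExp, ← Real.exp_nat_mul, ← Real.exp_add]
  ring_nf

namespace IsCenteredGaussianPair

variable {Y Z : Ω → ℝ}

lemma symm (h : IsCenteredGaussianPair P Y Z) : IsCenteredGaussianPair P Z Y := fun a b => by
  simpa only [add_comm] using h b a

lemma exists_map_left (h : IsCenteredGaussianPair P Y Z) :
    ∃ w : ℝ≥0, P.map Y = gaussianReal 0 w := by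
  simpa using h 1 0

lemma memLp_two_left (h : IsCenteredGaussianPair P Y Z) : MemLp Y 2 P :=
  h.exists_map_left.elim fun _ hw => memLp_two_of_map_eq_gaussianReal hw

lemma memLp_stochasticExp_left (h : IsCenteredGaussianPair P Y Z) {p : ℝ≥0∞} (hp : p ≠ ∞) :
    MemLp (stochasticExp P Y) p P := by
  obtain ⟨w, hw⟩ := h.exists_map_left
  unfold stochasticExp
  simpa only [Real.exp_sub, div_eq_mul_inv] using
    (memLp_exp_of_map_eq_gaussianReal hw hp).mul_const _

lemma integrable_stochasticExp_pow_mul_pow (h : IsCenteredGaussianPair P Y Z) (k j : ℕ) :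
    Integrable (fun ω => stochasticExp P Y ω ^ k * stochasticExp P Z ω ^ j) P := by
  obtain ⟨w, hw⟩ := h k j
  simp_rw [stochasticExp_pow_mul_pow]
  simpa only [one_mul] using (integrable_exp_mul_of_map_eq_gaussianReal hw 1).mul_const _

lemma integral_stochasticExp_pow_mul_pow (h : IsCenteredGaussianPair P Y Z) (k j : ℕ) :
    ∫ ω, stochasticExp P Y ω ^ k * stochasticExp P Z ω ^ j ∂P
      = exp ((∫ ω, (k * Y ω + j * Z ω) ^ 2 ∂P) / 2
          - (k * ∫ ω, Y ω ^ 2 ∂P + j * ∫ ω, Z ω ^ 2 ∂P) / 2) := by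
  obtain ⟨w, hw⟩ := h k j
  simp_rw [stochasticExp_pow_mul_pow, integral_mul_const,
    integral_exp_of_map_eq_gaussianReal hw, ← Real.exp_add]
  congr 1
  ring

end IsCenteredGaussianPair

end CenteredGaussianPair

section GaussianSequence

variable {Ω : Type*} [MeasurableSpace Ω] {P : Measure Ω} {Xn : ℕ → Ω → ℝ} {X : Ω → ℝ}

lemma tendsto_integral_sq_add_of_tendsto_integral_sq_sub
    (hG : ∀ n, IsCenteredGaussianPair P (Xn n) X)
    (hconv : Tendsto (fun n => ∫ ω, (Xn n ω - X ω) ^ 2 ∂P) atTop (𝓝 0)) (a b : ℝ) :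
    Tendsto (fun n => ∫ ω, (a * Xn n ω + b * X ω) ^ 2 ∂P) atTop
      (𝓝 ((a + b) ^ 2 * ∫ ω, X ω ^ 2 ∂P)) := by
  have hX : MemLp X 2 P := (hG 0).symm.memLp_two_left
  have hdiff : ∀ n, ∫ ω, (a * Xn n ω + b * X ω - (a + b) * X ω) ^ 2 ∂P
      = a ^ 2 * ∫ ω, (Xn n ω - X ω) ^ 2 ∂P := fun n => by
    rw [← integral_const_mul]; congr 1 with ω; ring
  have hlim : ∫ ω, ((a + b) * X ω) ^ 2 ∂P = (a + b) ^ 2 * ∫ ω, X ω ^ 2 ∂P := by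
    rw [← integral_const_mul]; congr 1 with ω; ring
  rw [← hlim]
  refine tendsto_integral_sq_of_tendsto_integral_sq_sub
    (fun n => ((hG n).memLp_two_left.const_mul a).add (hX.const_mul b)) (hX.const_mul (a + b)) ?_
  simpa [hdiff] using hconv.const_mul (a ^ 2)

lemma tendsto_integral_stochasticExp_pow_mul_pow
    (hG : ∀ n, IsCenteredGaussianPair P (Xn n) X)
    (hconv : Tendsto (fun n => ∫ ω, (Xn n ω - X ω) ^ 2 ∂P) atTop (𝓝 0)) (k j : ℕ) :
    Tendsto (fun n => ∫ ω, stochasticExp P (Xn n) ω ^ k * stochasticExp P X ω ^ j ∂P) atTop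
      (𝓝 (exp ((((k + j : ℕ) : ℝ) ^ 2 - (k + j : ℕ)) * (∫ ω, X ω ^ 2 ∂P) / 2))) := by
  simp_rw [(hG _).integral_stochasticExp_pow_mul_pow]
  have hvar := tendsto_integral_sq_add_of_tendsto_integral_sq_sub hG hconv 1 0
  simp only [one_mul, zero_mul, add_zero, one_pow] at hvar
  convert (((tendsto_integral_sq_add_of_tendsto_integral_sq_sub hG hconv k j).div_const 2).sub
    (((hvar.const_mul (k : ℝ)).add_const (j * ∫ ω, X ω ^ 2 ∂P)).div_const 2)).rexp using 3
  push_cast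
  ring

end GaussianSequence

theorem stochastic_exponential_Lp_convergence_general
    (Ω : Type*) [MeasureSpace Ω] [IsProbabilityMeasure (ℙ : Measure Ω)]
    (X : Ω → ℝ) (Xn : ℕ → Ω → ℝ)
    (hGauss : ∀ n, ∀ a b : ℝ, ∃ w : NNReal,
      Measure.map (fun ω => a * Xn n ω + b * X ω) ℙ = gaussianReal 0 w)
    (hconv : Tendsto (fun n => ∫ ω, (Xn n ω - X ω) ^ 2 ∂ℙ) atTop (nhds 0)) :
    ∀ p : ℝ, 1 ≤ p →
      Tendsto (fun n =>
          ∫ ω, |Real.exp (Xn n ω - (∫ ω', Xn n ω' ^ 2 ∂ℙ) / 2)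
                  - Real.exp (X ω - (∫ ω', X ω' ^ 2 ∂ℙ) / 2)| ^ p ∂ℙ)
        atTop (nhds 0) := by
  intro p hp
  obtain ⟨N, hN_even, hpN⟩ : ∃ N : ℕ, Even N ∧ p ≤ N :=
    ⟨2 * ⌈p⌉₊, even_two_mul _, by push_cast; linarith [Nat.le_ceil p]⟩
  have hN : N ≠ 0 := by rintro rfl; norm_num at hpN; linarith
  have hG : ∀ n, IsCenteredGaussianPair ℙ (Xn n) X := hGauss
  have hmoment : Tendsto
      (fun n => ∫ ω, (stochasticExp ℙ (Xn n) ω - stochasticExp ℙ X ω) ^ N ∂ℙ) atTop (𝓝 0) :=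
    tendsto_integral_sub_pow_of_tendsto_integral_pow_mul_pow (g := fun _ => stochasticExp ℙ X)
      hN (fun n k _ => (hG n).integrable_stochasticExp_pow_mul_pow k (N - k)) fun k hk => by
        simpa only [Nat.add_sub_cancel' hk] using
          tendsto_integral_stochasticExp_pow_mul_pow hG hconv k (N - k)
  exact tendsto_integral_rpow_abs_of_tendsto_integral_pow (by linarith) hpN hN_even
    (fun n => ((hG n).memLp_stochasticExp_left (ENNReal.natCast_ne_top N)).sub
      ((hG n).symm.memLp_stochasticExp_left (ENNReal.natCast_ne_top N))) hmoment

/-- **`L^p` convergence of stochastic exponentials along a jointly Gaussian sequence.**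
If each pair `(X_n, X)` is jointly centered Gaussian, the variances are uniformly
bounded by `V`, and `E[(X_n - X)²] → 0`, then the stochastic exponentials
`exp(X_n - v_n/2)` converge to `exp(X - v/2)` in `L^p` for every `p ≥ 1`. -/
theorem stochastic_exponential_Lp_convergence
    (Ω : Type*) [MeasureSpace Ω] [IsProbabilityMeasure (ℙ : Measure Ω)]
    (V : ℝ) (hV : 0 ≤ V)
    (X : Ω → ℝ) (Xn : ℕ → Ω → ℝ)
    (hX_meas : Measurable X) (hXn_meas : ∀ n, Measurable (Xn n))
    (hGauss : ∀ n, ∀ a b : ℝ, ∃ w : NNReal,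
      Measure.map (fun ω => a * Xn n ω + b * X ω) ℙ = gaussianReal 0 w)
    (hvn : ∀ n, (∫ ω, Xn n ω ^ 2 ∂ℙ) ≤ V) (hv : (∫ ω, X ω ^ 2 ∂ℙ) ≤ V)
    (hconv : Tendsto (fun n => ∫ ω, (Xn n ω - X ω) ^ 2 ∂ℙ) atTop (nhds 0)) :
    ∀ p : ℝ, 1 ≤ p →
      Tendsto (fun n =>
          ∫ ω, |Real.exp (Xn n ω - (∫ ω', Xn n ω' ^ 2 ∂ℙ) / 2)
                  - Real.exp (X ω - (∫ ω', X ω' ^ 2 ∂ℙ) / 2)| ^ p ∂ℙ)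
        atTop (nhds 0) :=
  stochastic_exponential_Lp_convergence_general Ω X Xn hGauss hconv
end
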